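/- Let 0 < p < 1 and p < q ≤ 2 be reals and n ≥ 2, let J_n ∈ ℝ^{n×n} be the all-ones matrix, and set A = I + n^{1/q−1}·J_n. Then for every ε with n^{−(1/p − 1/q)} < ε and ε^p ≤ 1 − 2^{−p}: the identity I satisfies ‖A − I‖_{S_p} ≤ 2ε‖A‖_{S_p} (Schatten p-quasinorm) and nnz(I) = n; moreover, if 1 ≤ q ≤ 2 then every Ã ∈ ℝ^{n×n} with ‖A − Ã‖_{S_q} ≤ 0.1‖A‖_{S_q} satisfies nnz(Ã) ≥ 0.96·n² − n, and if 0 < q < 1 then every Ã ∈ ℝ^{n×n} with ‖A − Ã‖_{S_q} ≤ 2^{−1/q}·0.1·‖A‖_{S_q} satisfies nnz(Ã) ≥ 0.96·n² − n. -/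

import Mathlib

/-
Write A = I + cJ with c = n^{1/q-1}, so that cn = n^{1/q}. Since J² = nJ, the Gram matrices of
A - I = cJ and of A both have the form αI + βJ, whose eigenvalues are α (n - 1 times) and α + nβ
(once). Hence A - I has the single nonzero singular value n^{1/q}, while A has singular values
1 (n - 1 times) and 1 + n^{1/q}. So ‖A‖_{S_p} ≥ n^{1/p} and
‖A - I‖_{S_p} = n^{1/q} = n^{-(1/p-1/q)} n^{1/p} ≤ ε ‖A‖_{S_p}. Convexity of t^q (q ≥ 1), resp.
subadditivity (q < 1), bounds ‖A‖_{S_q} by 2 n^{1/q}, resp. (2n)^{1/q}, so in both cases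
‖A - Ã‖_{S_q} ≤ 0.2 n^{1/q} = 0.2 cn. Every entry of A is at least c, so each zero entry of Ã
contributes at least c² to ‖A - Ã‖_F² ≤ ‖A - Ã‖_{S_q}² ≤ 0.04 c² n² (as q ≤ 2):
Ã has at most 0.04 n² zero entries.
-/

open scoped BigOperators ENNReal
open Matrix

/-- Number of nonzero entries of a vector. -/
noncomputable def nnzv {n : ℕ} (x : Fin n → ℝ) : ℕ :=
  (Finset.univ.filter fun i => x i ≠ 0).card

/-- The ℓ_p norm of a vector, for a real exponent `p`. -/
noncomputable def lpNorm {n : ℕ} (p : ℝ) (x : Fin n → ℝ) : ℝ :=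
  (∑ i, |x i| ^ p) ^ (1 / p)

/-- `IsHead x c y` : `y` is obtained from `x` by keeping (at most) `c` entries that are
largest in absolute value (exactly `min c n` of them, ties broken arbitrarily) and zeroing out the rest. -/
def IsHead {n : ℕ} (x : Fin n → ℝ) (c : ℕ) (y : Fin n → ℝ) : Prop :=
  ∃ T : Finset (Fin n), T.card = min c n ∧ (∀ i ∈ T, y i = x i) ∧ (∀ i ∉ T, y i = 0) ∧
    ∀ i ∈ T, ∀ j ∉ T, |x j| ≤ |x i|

/-- The singular values of a real matrix: square roots of the eigenvalues of `Aᵀ * A`. -/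
noncomputable def singVals {m n : Type*} [Fintype m] [Fintype n] [DecidableEq n]
    (A : Matrix m n ℝ) : n → ℝ :=
  fun j => Real.sqrt ((show (Aᵀ * A).IsHermitian by simpa using Matrix.isHermitian_conjTranspose_mul_self A).eigenvalues j)

/-- The Schatten p-(quasi)norm of a real matrix, for a real exponent `p > 0`. -/
noncomputable def schattenF {m n : Type*} [Fintype m] [Fintype n] [DecidableEq n]
    (p : ℝ) (A : Matrix m n ℝ) : ℝ :=
  (∑ j, singVals A j ^ p) ^ (1 / p)

/-- The spectral norm (Schatten ∞-norm): the largest singular value. -/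
noncomputable def specNorm {m n : Type*} [Fintype m] [Fintype n] [DecidableEq n]
    (A : Matrix m n ℝ) : ℝ :=
  ⨆ j, singVals A j

open Classical in
/-- The Schatten p-norm with exponent `p ∈ (0,∞]`. -/
noncomputable def schattenE {m n : Type*} [Fintype m] [Fintype n] [DecidableEq n]
    (p : ℝ≥0∞) (A : Matrix m n ℝ) : ℝ :=
  if p = ⊤ then specNorm A else schattenF p.toReal A

/-- Number of nonzero entries of a matrix. -/
noncomputable def nnz {m n : Type*} [Fintype m] [Fintype n] (A : Matrix m n ℝ) : ℕ :=
  (Finset.univ.filter fun ij : m × n => A ij.1 ij.2 ≠ 0).card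

lemma Real.sum_rpow_le_rpow_sum {ι : Type*} (s : Finset ι) {f : ι → ℝ} (hf : ∀ i ∈ s, 0 ≤ f i)
    {t : ℝ} (ht : 1 ≤ t) : ∑ i ∈ s, f i ^ t ≤ (∑ i ∈ s, f i) ^ t := by
  induction s using Finset.cons_induction with
  | empty => simp [Real.zero_rpow (by positivity : t ≠ 0)]
  | cons a s ha ih =>
    simp only [Finset.forall_mem_cons] at hf
    rw [Finset.sum_cons, Finset.sum_cons]
    calc f a ^ t + ∑ i ∈ s, f i ^ t ≤ f a ^ t + (∑ i ∈ s, f i) ^ t := by gcongr; exact ih hf.2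
      _ ≤ (f a + ∑ i ∈ s, f i) ^ t :=
        Real.add_rpow_le_rpow_add hf.1 (Finset.sum_nonneg hf.2) ht

lemma Real.rpow_add_le_mul_rpow_add_rpow {a b : ℝ} (ha : 0 ≤ a) (hb : 0 ≤ b) {p : ℝ}
    (hp : 1 ≤ p) : (a + b) ^ p ≤ 2 ^ (p - 1) * (a ^ p + b ^ p) := by
  lift a to NNReal using ha
  lift b to NNReal using hb
  exact_mod_cast NNReal.rpow_add_le_mul_rpow_add_rpow a b hp

lemma sum_comp_eq_of_forall_eq_or_eq {ι : Type*} [Fintype ι] {ν : ι → ℝ} {a b : ℝ}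
    (hν : ∀ i, ν i = a ∨ ν i = b) (hsum : ∑ i, ν i = (Fintype.card ι - 1) * a + b)
    (f : ℝ → ℝ) : ∑ i, f (ν i) = (Fintype.card ι - 1) * f a + f b := by
  classical
  set k := (Finset.univ.filter fun i => ν i = b).card
  have hsplit : ∀ g : ℝ → ℝ, ∑ i, g (ν i) = (Fintype.card ι - k) * g a + k * g b := by
    intro g
    rw [← Finset.sum_filter_not_add_sum_filter _ (fun i => ν i = b),
      Finset.sum_congr rfl fun i hi => congrArg g ((hν i).resolve_right (Finset.mem_filter.1 hi).2),
      Finset.sum_congr rfl fun i hi => congrArg g (Finset.mem_filter.1 hi).2,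
      Finset.sum_const, Finset.sum_const, nsmul_eq_mul, nsmul_eq_mul,
      Finset.filter_not, Finset.card_sdiff_of_subset (Finset.filter_subset _ _),
      Finset.card_univ, Nat.cast_sub (Finset.card_le_univ _)]
  -- unless `a = b`, the condition on the sum forces `k = 1`
  by_cases hab : a = b
  · subst hab
    rw [hsplit]
    ring
  · have hk : (k : ℝ) = 1 := by
      have h := (hsplit id).symm.trans hsum
      simp only [id] at h
      have : ((k : ℝ) - 1) * (b - a) = 0 := by linear_combination h
      linarith [(mul_eq_zero.1 this).resolve_right (sub_ne_zero.2 (Ne.symm hab))]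
    rw [hsplit, hk, one_mul]

namespace Matrix

lemma isHermitian_transpose_mul_self {m n : Type*} [Fintype m] (M : Matrix m n ℝ) :
    (Mᵀ * M).IsHermitian := by
  simpa using M.isHermitian_conjTranspose_mul_self

variable {ι : Type*} [Fintype ι] [DecidableEq ι]

lemma IsHermitian.eigenvalues_eq_or_eq {H : Matrix ι ι ℝ} (hH : H.IsHermitian) {a b : ℝ}
    (hab : (H - a • 1) * (H - b • 1) = 0) (i : ι) :
    hH.eigenvalues i = a ∨ hH.eigenvalues i = b := by
  set v := ⇑(hH.eigenvectorBasis i)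
  have hv : H *ᵥ v = hH.eigenvalues i • v := hH.mulVec_eigenvectorBasis i
  have hv0 : v ≠ 0 := fun h =>
    hH.eigenvectorBasis.orthonormal.ne_zero i (by ext j; exact congrFun h j)
  have hshift : ∀ c : ℝ, (H - c • 1) *ᵥ v = (hH.eigenvalues i - c) • v := fun c => by
    rw [sub_mulVec, smul_mulVec, one_mulVec, hv, sub_smul]
  have key : ((hH.eigenvalues i - a) * (hH.eigenvalues i - b)) • v = 0 := by
    rw [mul_comm, ← smul_smul, ← hshift, ← mulVec_smul, ← hshift, mulVec_mulVec, hab, zero_mulVec]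
  rcases mul_eq_zero.1 ((smul_eq_zero.1 key).resolve_right hv0) with h | h
  exacts [Or.inl (sub_eq_zero.1 h), Or.inr (sub_eq_zero.1 h)]

lemma IsHermitian.sum_comp_eigenvalues_of_mul_eq_zero {H : Matrix ι ι ℝ} (hH : H.IsHermitian)
    {a b : ℝ} (hab : (H - a • 1) * (H - b • 1) = 0) (htr : H.trace = (Fintype.card ι - 1) * a + b)
    (f : ℝ → ℝ) : ∑ i, f (hH.eigenvalues i) = (Fintype.card ι - 1) * f a + f b :=
  sum_comp_eq_of_forall_eq_or_eq (hH.eigenvalues_eq_or_eq hab)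
    (by simpa [hH.trace_eq_sum_eigenvalues] using htr) f

end Matrix

section Schatten

variable {m n : Type*} [Fintype m] [Fintype n]

lemma card_sub_nnz_mul_le_sum_sq {A B : Matrix m n ℝ} {c : ℝ} (hA : ∀ i j, c ≤ A i j ^ 2) :
    ((Fintype.card m * Fintype.card n : ℝ) - nnz B) * c ≤ ∑ i, ∑ j, (A - B) i j ^ 2 := by
  classical
  set Z := Finset.univ.filter fun ij : m × n => B ij.1 ij.2 = 0
  have hZ : (Z.card : ℝ) = Fintype.card m * Fintype.card n - nnz B := by
    have := Finset.card_filter_add_card_filter_not (s := Finset.univ)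
      (fun ij : m × n => B ij.1 ij.2 = 0)
    rw [Finset.card_univ, Fintype.card_prod] at this
    rw [nnz, eq_sub_iff_add_eq]
    exact_mod_cast this
  rw [← hZ, ← Fintype.sum_prod_type', ← nsmul_eq_mul, ← Finset.sum_const]
  calc ∑ _ ∈ Z, c ≤ ∑ ij ∈ Z, (A - B) ij.1 ij.2 ^ 2 :=
        Finset.sum_le_sum fun ij hij => by
          simpa [(Finset.mem_filter.1 hij).2] using hA ij.1 ij.2
    _ ≤ ∑ ij : m × n, (A - B) ij.1 ij.2 ^ 2 :=
        Finset.sum_le_univ_sum_of_nonneg fun _ => sq_nonneg _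

variable [DecidableEq n]

lemma singVals_nonneg (A : Matrix m n ℝ) (j : n) : 0 ≤ singVals A j :=
  Real.sqrt_nonneg _

lemma sum_singVals_rpow_nonneg (A : Matrix m n ℝ) (p : ℝ) :
    0 ≤ ∑ j, singVals A j ^ p :=
  Finset.sum_nonneg fun j _ => Real.rpow_nonneg (singVals_nonneg A j) p

lemma schattenF_nonneg (p : ℝ) (A : Matrix m n ℝ) : 0 ≤ schattenF p A :=
  Real.rpow_nonneg (sum_singVals_rpow_nonneg A p) _

lemma sum_sq_le_schattenF_sq (M : Matrix m n ℝ) {q : ℝ} (hq0 : 0 < q)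
    (hq2 : q ≤ 2) : ∑ i, ∑ j, M i j ^ 2 ≤ schattenF q M ^ 2 := by
  have hH := M.isHermitian_transpose_mul_self
  have hsq : ∀ j, singVals M j ^ 2 = hH.eigenvalues j :=
    fun j => Real.sq_sqrt (Matrix.eigenvalues_conjTranspose_mul_self_nonneg M j)
  have hpow : ∀ x : ℝ, 0 ≤ x → x ^ 2 = (x ^ q) ^ (2 / q) := fun x hx => by
    rw [← Real.rpow_mul hx, mul_div_cancel₀ _ hq0.ne', ← Real.rpow_natCast]
    norm_num
  have hS : schattenF q M ^ 2 = (∑ j, singVals M j ^ q) ^ (2 / q) := by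
    rw [schattenF, ← Real.rpow_natCast, ← Real.rpow_mul (sum_singVals_rpow_nonneg M q)]
    norm_num [div_eq_inv_mul]
  calc ∑ i, ∑ j, M i j ^ 2 = (Mᵀ * M).trace := by
        simp only [Matrix.trace, Matrix.diag, Matrix.mul_apply, Matrix.transpose_apply, sq]
        exact Finset.sum_comm
    _ = ∑ j, singVals M j ^ 2 := by simpa [hsq] using hH.trace_eq_sum_eigenvalues
    _ = ∑ j, (singVals M j ^ q) ^ (2 / q) :=
        Finset.sum_congr rfl fun j _ => hpow _ (singVals_nonneg M j)
    _ ≤ (∑ j, singVals M j ^ q) ^ (2 / q) :=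
        Real.sum_rpow_le_rpow_sum _ (fun j _ => Real.rpow_nonneg (singVals_nonneg M j) q)
          (by rw [le_div_iff₀ hq0]; linarith)
    _ = schattenF q M ^ 2 := hS.symm

lemma one_sub_mul_card_le_nnz {A B : Matrix m n ℝ} {c δ q : ℝ} (hc : 0 < c)
    (hA : ∀ i j, c ≤ A i j ^ 2) (hq0 : 0 < q) (hq2 : q ≤ 2)
    (hB : schattenF q (A - B) ^ 2 ≤ δ * c * (Fintype.card m * Fintype.card n)) :
    (1 - δ) * (Fintype.card m * Fintype.card n) ≤ nnz B := by
  have h := (card_sub_nnz_mul_le_sum_sq (B := B) hA).trans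
    ((sum_sq_le_schattenF_sq (A - B) hq0 hq2).trans hB)
  nlinarith

end Schatten

lemma nnz_one {n : Type*} [Fintype n] [DecidableEq n] :
    nnz (1 : Matrix n n ℝ) = Fintype.card n := by
  rw [nnz, ← Finset.card_univ (α := n)]
  refine Finset.card_bij' (fun ij _ => ij.1) (fun i _ => (i, i)) ?_ ?_ ?_ ?_ <;>
    simp +contextual [Matrix.one_apply]

section AllOnes

variable {ι : Type*} {J : Matrix ι ι ℝ}

lemma transpose_allOnes (hJ : ∀ i j, J i j = 1) : Jᵀ = J := by
  ext i j
  simp [hJ]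

variable [Fintype ι]

lemma allOnes_mul_self (hJ : ∀ i j, J i j = 1) : J * J = (Fintype.card ι : ℝ) • J := by
  ext i j
  simp [Matrix.mul_apply, hJ]

lemma trace_allOnes (hJ : ∀ i j, J i j = 1) : J.trace = Fintype.card ι := by
  simp [Matrix.trace, hJ]

variable [DecidableEq ι]

lemma sum_comp_singVals_of_transpose_mul_self_eq {m : Type*} [Fintype m] {M : Matrix m ι ℝ}
    (hJ : ∀ i j, J i j = 1) {α β : ℝ} (hM : Mᵀ * M = α • 1 + β • J) (f : ℝ → ℝ) :
    ∑ j, f (singVals M j) =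
      (Fintype.card ι - 1) * f √α + f √(α + Fintype.card ι * β) := by
  refine M.isHermitian_transpose_mul_self.sum_comp_eigenvalues_of_mul_eq_zero ?_ ?_ (f ∘ Real.sqrt)
  · simp only [hM, add_smul, Matrix.sub_mul, Matrix.mul_sub, Matrix.add_mul, Matrix.mul_add,
      Matrix.smul_mul, Matrix.mul_smul, Matrix.one_mul, Matrix.mul_one, allOnes_mul_self hJ]
    module
  · rw [hM, trace_add, trace_smul, trace_smul, trace_one, trace_allOnes hJ, smul_eq_mul,
      smul_eq_mul]
    ring

lemma sum_singVals_smul_allOnes_rpow (hJ : ∀ i j, J i j = 1) {c : ℝ} (hc : 0 ≤ c) {r : ℝ}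
    (hr : r ≠ 0) : ∑ j, singVals (c • J) j ^ r = (c * Fintype.card ι) ^ r := by
  have hM : (c • J)ᵀ * (c • J) = (0 : ℝ) • 1 + (c ^ 2 * Fintype.card ι) • J := by
    rw [transpose_smul, transpose_allOnes hJ, smul_mul_smul, allOnes_mul_self hJ, smul_smul]
    simp only [zero_smul, zero_add]
    ring_nf
  rw [sum_comp_singVals_of_transpose_mul_self_eq hJ hM (· ^ r), Real.sqrt_zero,
    Real.zero_rpow hr, mul_zero, zero_add, zero_add,
    show (Fintype.card ι : ℝ) * (c ^ 2 * Fintype.card ι) = (c * Fintype.card ι) ^ 2 by ring,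
    Real.sqrt_sq (by positivity)]

lemma schattenF_smul_allOnes (hJ : ∀ i j, J i j = 1) {c : ℝ} (hc : 0 ≤ c) {p : ℝ} (hp : 0 < p) :
    schattenF p (c • J) = c * Fintype.card ι := by
  rw [schattenF, sum_singVals_smul_allOnes_rpow hJ hc hp.ne', ← Real.rpow_mul (by positivity),
    mul_one_div_cancel hp.ne', Real.rpow_one]

lemma sum_singVals_one_add_smul_allOnes_rpow (hJ : ∀ i j, J i j = 1) {c : ℝ} (hc : 0 ≤ c)
    (r : ℝ) : ∑ j, singVals (1 + c • J) j ^ r =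
      (Fintype.card ι - 1) + (1 + c * Fintype.card ι) ^ r := by
  have hM : (1 + c • J)ᵀ * (1 + c • J) = (1 : ℝ) • 1 + (2 * c + c ^ 2 * Fintype.card ι) • J := by
    simp only [transpose_add, transpose_one, transpose_smul, transpose_allOnes hJ, Matrix.add_mul,
      Matrix.mul_add, Matrix.one_mul, Matrix.mul_one, smul_mul_smul, allOnes_mul_self hJ]
    module
  rw [sum_comp_singVals_of_transpose_mul_self_eq hJ hM (· ^ r), Real.sqrt_one, Real.one_rpow,
    mul_one, show 1 + (Fintype.card ι : ℝ) * (2 * c + c ^ 2 * Fintype.card ι) =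
      (1 + c * Fintype.card ι) ^ 2 by ring, Real.sqrt_sq (by positivity)]

lemma card_rpow_le_schattenF_one_add_smul_allOnes (hJ : ∀ i j, J i j = 1) {c : ℝ} (hc : 0 ≤ c)
    {p : ℝ} (hp : 0 < p) : (Fintype.card ι : ℝ) ^ (1 / p) ≤ schattenF p (1 + c • J) := by
  rw [schattenF, sum_singVals_one_add_smul_allOnes_rpow hJ hc]
  have hcN : 0 ≤ c * Fintype.card ι := by positivity
  have : 1 ≤ (1 + c * Fintype.card ι) ^ p := Real.one_le_rpow (by linarith) hp.le
  gcongr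
  linarith

lemma schattenF_one_add_smul_allOnes_le_of_one_le [Nonempty ι] (hJ : ∀ i j, J i j = 1) {c : ℝ}
    (hc : 0 ≤ c) {q : ℝ} (hq : 1 ≤ q) (hcq : (c * Fintype.card ι) ^ q = Fintype.card ι) :
    schattenF q (1 + c • J) ≤ 2 * (Fintype.card ι : ℝ) ^ (1 / q) := by
  have hN : (1 : ℝ) ≤ Fintype.card ι := by exact_mod_cast Fintype.card_pos
  have hconv : (1 + c * Fintype.card ι) ^ q ≤ 2 ^ (q - 1) * (1 + Fintype.card ι) := by
    have h := Real.rpow_add_le_mul_rpow_add_rpow zero_le_one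
      (by positivity : 0 ≤ c * Fintype.card ι) hq
    rwa [Real.one_rpow, hcq] at h
  have h2 : (1 : ℝ) ≤ 2 ^ (q - 1) := Real.one_le_rpow (by norm_num) (by linarith)
  have hsum : (Fintype.card ι - 1) + (1 + c * Fintype.card ι) ^ q ≤ 2 ^ q * Fintype.card ι := by
    rw [show (2 : ℝ) ^ q = 2 ^ (q - 1) * 2 by rw [← Real.rpow_add_one two_ne_zero, sub_add_cancel]]
    nlinarith
  rw [schattenF, sum_singVals_one_add_smul_allOnes_rpow hJ hc]
  calc _ ≤ ((2 : ℝ) ^ q * Fintype.card ι) ^ (1 / q) := by gcongr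
    _ = 2 * (Fintype.card ι : ℝ) ^ (1 / q) := by
      rw [Real.mul_rpow (by positivity) (by positivity), ← Real.rpow_mul zero_le_two,
        mul_one_div_cancel (by positivity), Real.rpow_one]

lemma schattenF_one_add_smul_allOnes_le_of_le_one (hJ : ∀ i j, J i j = 1) {c : ℝ}
    (hc : 0 ≤ c) {q : ℝ} (hq0 : 0 < q) (hq : q ≤ 1)
    (hcq : (c * Fintype.card ι) ^ q = Fintype.card ι) :
    schattenF q (1 + c • J) ≤ 2 ^ (1 / q) * (Fintype.card ι : ℝ) ^ (1 / q) := by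
  have hconc : (1 + c * Fintype.card ι) ^ q ≤ 1 + Fintype.card ι := by
    have h := Real.rpow_add_le_add_rpow zero_le_one (by positivity : 0 ≤ c * Fintype.card ι)
      hq0.le hq
    rwa [Real.one_rpow, hcq] at h
  have hcN : 0 ≤ c * Fintype.card ι := by positivity
  have hone : 1 ≤ (1 + c * Fintype.card ι) ^ q := Real.one_le_rpow (by linarith) hq0.le
  rw [schattenF, sum_singVals_one_add_smul_allOnes_rpow hJ hc, ← Real.mul_rpow zero_le_two
    (by positivity)]
  exact Real.rpow_le_rpow (by linarith) (by linarith) (by positivity)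

lemma one_sub_sq_mul_card_sq_le_nnz (hJ : ∀ i j, J i j = 1) {c : ℝ} (hc : 0 < c) {q : ℝ}
    (hq0 : 0 < q) (hq2 : q ≤ 2) {δ : ℝ} {B : Matrix ι ι ℝ}
    (hB : schattenF q (1 + c • J - B) ≤ δ * (c * Fintype.card ι)) :
    (1 - δ ^ 2) * (Fintype.card ι : ℝ) ^ 2 ≤ nnz B := by
  have hentry : ∀ i j, c ^ 2 ≤ (1 + c • J) i j ^ 2 := fun i j => by
    have : c ≤ (1 + c • J) i j := by by_cases h : i = j <;> simp [h, hJ]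
    gcongr
  have hB2 : schattenF q (1 + c • J - B) ^ 2 ≤
      δ ^ 2 * c ^ 2 * (Fintype.card ι * Fintype.card ι) := by
    calc _ ≤ (δ * (c * Fintype.card ι)) ^ 2 := by gcongr; exact schattenF_nonneg _ _
      _ = _ := by ring
  simpa [sq] using one_sub_mul_card_le_nnz (pow_pos hc 2) hentry hq0 hq2 hB2

end AllOnes

theorem stmt18_general (p q : ℝ) (hp0 : 0 < p) (hpq : p < q) (hq2 : q ≤ 2)
    (n : ℕ) (hn : 2 ≤ n)
    (J : Matrix (Fin n) (Fin n) ℝ) (hJ : ∀ i j, J i j = 1)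
    (A : Matrix (Fin n) (Fin n) ℝ) (hA : A = 1 + (n : ℝ) ^ (1 / q - 1) • J)
    (ε : ℝ) (hε1 : (n : ℝ) ^ (-(1 / p - 1 / q)) < ε) :
    schattenF p (A - 1) ≤ 2 * ε * schattenF p A ∧
    nnz (1 : Matrix (Fin n) (Fin n) ℝ) = n ∧
    (1 ≤ q → ∀ At : Matrix (Fin n) (Fin n) ℝ,
      schattenF q (A - At) ≤ 0.1 * schattenF q A →
      0.96 * (n : ℝ) ^ 2 - n ≤ (nnz At : ℝ)) ∧
    (q < 1 → ∀ At : Matrix (Fin n) (Fin n) ℝ,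
      schattenF q (A - At) ≤ 2 ^ (-(1 / q)) * 0.1 * schattenF q A →
      0.96 * (n : ℝ) ^ 2 - n ≤ (nnz At : ℝ)) := by
  have hq0 : 0 < q := hp0.trans hpq
  have hn0 : (0 : ℝ) < n := by exact_mod_cast (show 0 < n by omega)
  have : Nonempty (Fin n) := ⟨⟨0, by omega⟩⟩
  set c := (n : ℝ) ^ (1 / q - 1)
  have hc0 : 0 < c := by positivity
  have hcn : c * Fintype.card (Fin n) = (n : ℝ) ^ (1 / q) := by
    rw [Fintype.card_fin, ← Real.rpow_add_one hn0.ne', sub_add_cancel]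
  have hcnq : (c * Fintype.card (Fin n)) ^ q = Fintype.card (Fin n) := by
    rw [hcn, Fintype.card_fin, ← Real.rpow_mul hn0.le, one_div_mul_cancel hq0.ne', Real.rpow_one]
  have hsparse : ∀ At, schattenF q (A - At) ≤ 0.2 * (n : ℝ) ^ (1 / q) →
      0.96 * (n : ℝ) ^ 2 - n ≤ (nnz At : ℝ) := fun At h => by
    have := one_sub_sq_mul_card_sq_le_nnz hJ hc0 hq0 hq2 (δ := 0.2) (hA ▸ hcn ▸ h)
    rw [Fintype.card_fin] at this
    linarith
  refine ⟨?_, nnz_one.trans (Fintype.card_fin n), fun hq1 At h => hsparse At ?_,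
    fun hq1 At h => hsparse At ?_⟩
  · have hε0 : 0 ≤ ε := (Real.rpow_nonneg hn0.le _).trans hε1.le
    calc schattenF p (A - 1) = (n : ℝ) ^ (-(1 / p - 1 / q)) * (n : ℝ) ^ (1 / p) := by
          rw [hA, add_sub_cancel_left, schattenF_smul_allOnes hJ hc0.le hp0, hcn,
            ← Real.rpow_add hn0]
          ring_nf
      _ ≤ ε * schattenF p A := by
          gcongr
          simpa [hA] using card_rpow_le_schattenF_one_add_smul_allOnes hJ hc0.le hp0
      _ ≤ 2 * ε * schattenF p A := by nlinarith [schattenF_nonneg p A]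
  · have := schattenF_one_add_smul_allOnes_le_of_one_le hJ hc0.le hq1 hcnq
    rw [Fintype.card_fin, ← hA] at this
    linarith
  · have := schattenF_one_add_smul_allOnes_le_of_le_one hJ hc0.le hq0 hq1.le hcnq
    rw [Fintype.card_fin, ← hA] at this
    calc schattenF q (A - At) ≤ 2 ^ (-(1 / q)) * 0.1 * (2 ^ (1 / q) * (n : ℝ) ^ (1 / q)) :=
          h.trans (by gcongr)
      _ = 0.1 * (n : ℝ) ^ (1 / q) := by
          rw [Real.rpow_neg zero_le_two]
          field_simp
      _ ≤ 0.2 * (n : ℝ) ^ (1 / q) := by gcongr; norm_num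

/-- hard instance `A = I + n^{1/q-1}·J_n` for `0 < p < 1` and `p < q ≤ 2`. -/
theorem stmt18 (p q : ℝ) (hp0 : 0 < p) (hp1 : p < 1) (hpq : p < q) (hq2 : q ≤ 2)
    (n : ℕ) (hn : 2 ≤ n)
    (J : Matrix (Fin n) (Fin n) ℝ) (hJ : ∀ i j, J i j = 1)
    (A : Matrix (Fin n) (Fin n) ℝ) (hA : A = 1 + (n : ℝ) ^ (1 / q - 1) • J)
    (ε : ℝ) (hε1 : (n : ℝ) ^ (-(1 / p - 1 / q)) < ε) (hε2 : ε ^ p ≤ 1 - 2 ^ (-p)) :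
    schattenF p (A - 1) ≤ 2 * ε * schattenF p A ∧
    nnz (1 : Matrix (Fin n) (Fin n) ℝ) = n ∧
    (1 ≤ q → ∀ At : Matrix (Fin n) (Fin n) ℝ,
      schattenF q (A - At) ≤ 0.1 * schattenF q A →
      0.96 * (n : ℝ) ^ 2 - n ≤ (nnz At : ℝ)) ∧
    (q < 1 → ∀ At : Matrix (Fin n) (Fin n) ℝ,
      schattenF q (A - At) ≤ 2 ^ (-(1 / q)) * 0.1 * schattenF q A →
      0.96 * (n : ℝ) ^ 2 - n ≤ (nnz At : ℝ)) :=
  stmt18_general p q hp0 hpq hq2 n hn J hJ A hA ε hε1
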